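/- Let R be a ring Lie nilpotent of index n ≥ 2 and L a left ideal of R. Then L + rad(R) is a two-sided ideal of R. In particular, every left ideal of R containing rad(R) is a two-sided ideal. -/

import Mathlib

/-- Left-normed commutator: `lnc x [x₂,…,x_k] = [x, x₂, …, x_k]*`. -/
def lnc {R : Type*} [Ring R] (x : R) (l : List R) : R :=
  l.foldl (fun a y => a * y - y * a) x

lemma lnc_append {R : Type*} [Ring R] (x : R) (l m : List R) :
    lnc x (l ++ m) = lnc (lnc x l) m := by
  simp [lnc, List.foldl_append]

/-- If all `[[d,z],s]` lie in a prime two-sided ideal `P`, then `[d,b] ∈ P`. -/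
lemma prime_step {R : Type*} [Ring R] (P : TwoSidedIdeal R)
    (hP : ∀ a b : R, (∀ r : R, a * r * b ∈ P) → a ∈ P ∨ b ∈ P)
    (d : R) (hcent : ∀ z s : R, ((d * z - z * d) * s - s * (d * z - z * d)) ∈ P)
    (b : R) : d * b - b * d ∈ P := by
  have key : ∀ r s : R,
      (d * b - b * d) * (r * s - s * r) + (d * r - r * d) * (b * s - s * b) ∈ P := by
    intro r s
    have h1 := hcent (b * r) s
    have h2 := P.mul_mem_right _ r (hcent b s)
    have h3 := P.mul_mem_left b _ (hcent r s)
    have h4 := hcent r (b * s - s * b)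
    have hmem := P.add_mem (P.sub_mem (P.sub_mem h1 h2) h3) h4
    have heq : (d * (b * r) - (b * r) * d) * s - s * (d * (b * r) - (b * r) * d)
          - ((d * b - b * d) * s - s * (d * b - b * d)) * r
          - b * ((d * r - r * d) * s - s * (d * r - r * d))
          + ((d * r - r * d) * (b * s - s * b) - (b * s - s * b) * (d * r - r * d))
        = (d * b - b * d) * (r * s - s * r) + (d * r - r * d) * (b * s - s * b) := by
      noncomm_ring
    rwa [heq] at hmem
  have k1 : ∀ r : R, (d * b - b * d) * (r * b - b * r) ∈ P := by
    intro r
    have := key r b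
    simpa using this
  have k2 : ∀ r : R, (d * b - b * d) * r * (d * b - b * d) ∈ P := by
    intro r
    have hmem := P.sub_mem (k1 (r * d)) (P.mul_mem_right _ d (k1 r))
    have heq : (d * b - b * d) * (r * d * b - b * (r * d))
          - (d * b - b * d) * (r * b - b * r) * d
        = (d * b - b * d) * r * (d * b - b * d) := by noncomm_ring
    rwa [heq] at hmem
  rcases hP _ _ k2 with h | h <;> exact h

theorem left_ideal_plus_radical_two_sided {R : Type*} [Ring R] (n : ℕ) (hn : 2 ≤ n)
    (hLn : ∀ (x : R) (l : List R), l.length = n → lnc x l = 0)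
    (L : Submodule R R) :
    ∃ I : TwoSidedIdeal R, ∀ x : R, x ∈ I ↔
      ∃ l ∈ L, ∃ u ∈ {u : R | ∀ P : TwoSidedIdeal R,
          (P ≠ ⊤ ∧ ∀ a b : R, (∀ r : R, a * r * b ∈ P) → a ∈ P ∨ b ∈ P) → u ∈ P},
        x = l + u := by
  set Rad : Set R := {u : R | ∀ P : TwoSidedIdeal R,
      (P ≠ ⊤ ∧ ∀ a b : R, (∀ r : R, a * r * b ∈ P) → a ∈ P ∨ b ∈ P) → u ∈ P} with hRad
  -- every commutator lies in Rad
  have hcommRad : ∀ a b : R, a * b - b * a ∈ Rad := by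
    intro a b P hPp
    obtain ⟨-, hP⟩ := hPp
    have T : ∀ m : ℕ, ∀ (x : R) (l : List R), l.length + m = n → 1 ≤ l.length →
        lnc x l ∈ P := by
      intro m
      induction m with
      | zero =>
        intro x l hl _
        rw [hLn x l (by omega)]
        exact P.zero_mem
      | succ m ih =>
        intro x l hl hl1
        have hne : l ≠ [] := by
          intro h; rw [h] at hl1; simp at hl1
        have hsplit : l.dropLast ++ [l.getLast hne] = l := List.dropLast_append_getLast hne
        set d := lnc x l.dropLast with hd
        have hlen : l.dropLast.length = l.length - 1 := List.length_dropLast (xs := l)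
        have hcent : ∀ z s : R, (d * z - z * d) * s - s * (d * z - z * d) ∈ P := by
          intro z s
          have := ih x (l.dropLast ++ [z, s]) (by simp [hlen]; omega) (by simp)
          rwa [lnc_append, show lnc d [z, s] =
            (d * z - z * d) * s - s * (d * z - z * d) from rfl] at this
        have hmem := prime_step P hP d hcent (l.getLast hne)
        have heq : lnc x (l.dropLast ++ [l.getLast hne])
            = d * l.getLast hne - l.getLast hne * d := by rw [lnc_append]; rfl
        rw [hsplit] at heq
        rwa [heq]
    have := T (n - 1) a [b] (by simp; omega) (by simp)
    simpa [lnc] using this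
  have radd : ∀ {u v : R}, u ∈ Rad → v ∈ Rad → u + v ∈ Rad := by
    intro u v hu hv P hPp
    exact P.add_mem (hu P hPp) (hv P hPp)
  refine ⟨TwoSidedIdeal.mk' {x : R | ∃ l ∈ L, ∃ u ∈ Rad, x = l + u}
    ⟨0, L.zero_mem, 0, fun P _ => P.zero_mem, by simp⟩
    ?_ ?_ ?_ ?_, fun x => by rw [TwoSidedIdeal.mem_mk']; rfl⟩
  · rintro x y ⟨l1, hl1, u1, hu1, rfl⟩ ⟨l2, hl2, u2, hu2, rfl⟩
    exact ⟨l1 + l2, L.add_mem hl1 hl2, u1 + u2, radd hu1 hu2, by abel⟩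
  · rintro x ⟨l, hl, u, hu, rfl⟩
    exact ⟨-l, L.neg_mem hl, -u, fun P hPp => P.neg_mem (hu P hPp), by abel⟩
  · rintro r x ⟨l, hl, u, hu, rfl⟩
    refine ⟨r * l, ?_, r * u, fun P hPp => P.mul_mem_left _ _ (hu P hPp), by noncomm_ring⟩
    simpa [smul_eq_mul] using L.smul_mem r hl
  · rintro x r ⟨l, hl, u, hu, rfl⟩
    refine ⟨r * l, ?_, u * r + (l * r - r * l),
      radd (fun P hPp => P.mul_mem_right _ _ (hu P hPp)) (hcommRad l r), by noncomm_ring⟩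
    simpa [smul_eq_mul] using L.smul_mem r hl
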